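/- arXiv:2004.09326 — 3 statements merged into one kernel-verified Lean document; each statement's English description precedes it below -/
import Mathlib

section
/- Let F be the free group with free basis x₁,…,x_k. Then every generating n-tuple of F satisfies n ≥ k and is Nielsen equivalent to the tuple (x₁,…,x_k, 1,…,1) consisting of the basis followed by n − k copies of the identity. In particular, any two generating n-tuples of F are Nielsen equivalent. -/
/-!
Among the tuples Nielsen equivalent to a generating tuple `T` of the free group `F` on `x₁, …, x_k`
choose one of minimal complexity: total length first, then a key recording the first halves
(rounded up) of the entries and of their inverses, compared lexicographically. Let `S` be the set
of its entries and their inverses. Minimality yields Nielsen's conditions: for `u, v ∈ S` with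
`u * v ≠ 1` we have `|u| ≤ |u v|` and `|v| ≤ |u v|` (N1), and for `u, v, w ∈ S` the letters of `v`
cannot cancel exactly halfway against both `u` and `w` (N2), since otherwise replacing `u` by
`u v` or `w` by `v w`, whichever matches the lexicographically smaller half of `v`, keeps the
length and lowers the key. Consequently, in a product of elements of `S` in which no neighbours
cancel, at least one letter of each factor survives, so a product of `m` factors has length at
least `m`. Hence every `xₐ` lies in `S`, every entry has length at most one (an entry of length
at least two is shortened by the inverse of its last letter), and the nontrivial entries are
pairwise distinct up to inversion. So the minimal tuple is `(x₁, …, x_k, 1, …, 1)` up to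
inverting and permuting entries.
-/

/-- An elementary Nielsen transformation on an `n`-tuple of elements of a group:
(T1) invert an entry, (T2) swap two distinct entries, (T3) replace an entry by its
product with another (distinct) entry. -/
inductive NielsenStep {G : Type*} [Group G] {n : ℕ} : (Fin n → G) → (Fin n → G) → Prop
  | inv (T : Fin n → G) (i : Fin n) : NielsenStep T (Function.update T i (T i)⁻¹)
  | swap (T : Fin n → G) (i j : Fin n) (hij : i ≠ j) : NielsenStep T (T ∘ Equiv.swap i j)
  | mul (T : Fin n → G) (i j : Fin n) (hij : i ≠ j) :
      NielsenStep T (Function.update T i (T i * T j))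

def NielsenEquiv {G : Type*} [Group G] {n : ℕ} (T T' : Fin n → G) : Prop :=
  Relation.ReflTransGen NielsenStep T T'

open Function

namespace NielsenEquiv

variable {G : Type*} [Group G] {n : ℕ}

@[refl]
theorem refl (T : Fin n → G) : NielsenEquiv T T := Relation.ReflTransGen.refl

theorem trans {T₁ T₂ T₃ : Fin n → G} (h₁₂ : NielsenEquiv T₁ T₂) (h₂₃ : NielsenEquiv T₂ T₃) :
    NielsenEquiv T₁ T₃ :=
  Relation.ReflTransGen.trans h₁₂ h₂₃

theorem of_step {T T' : Fin n → G} (h : NielsenStep T T') : NielsenEquiv T T' :=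
  Relation.ReflTransGen.single h

theorem update_inv (T : Fin n → G) (i : Fin n) : NielsenEquiv T (update T i (T i)⁻¹) :=
  of_step (.inv T i)

theorem update_mul (T : Fin n → G) {i j : Fin n} (hij : i ≠ j) :
    NielsenEquiv T (update T i (T i * T j)) :=
  of_step (.mul T i j hij)

theorem comp_swap (T : Fin n → G) {i j : Fin n} (hij : i ≠ j) :
    NielsenEquiv T (T ∘ Equiv.swap i j) :=
  of_step (.swap T i j hij)

theorem update_mul_inv (T : Fin n → G) {i j : Fin n} (hij : i ≠ j) :
    NielsenEquiv T (update T i (T i * (T j)⁻¹)) := by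
  have h := ((update_inv T j).trans (update_mul _ hij)).trans (update_inv _ j)
  convert h using 1
  ext l
  rcases eq_or_ne l j with rfl | hlj
  · simp [hij.symm]
  · rcases eq_or_ne l i with rfl | hli <;> simp [update_apply, *]

theorem _root_.NielsenStep.nielsenEquiv_symm {T T' : Fin n → G} (h : NielsenStep T T') :
    NielsenEquiv T' T := by
  cases h with
  | inv i => simpa using update_inv (update T i (T i)⁻¹) i
  | swap i j hij => simpa [comp_assoc, ← Equiv.coe_trans] using comp_swap (T ∘ Equiv.swap i j) hij
  | mul i j hij => simpa [hij.symm] using update_mul_inv (update T i (T i * T j)) hij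

theorem symm {T T' : Fin n → G} (h : NielsenEquiv T T') : NielsenEquiv T' T := by
  induction h with
  | refl => rfl
  | tail _ hstep ih => exact hstep.nielsenEquiv_symm.trans ih

theorem comp_perm (T : Fin n → G) (σ : Equiv.Perm (Fin n)) : NielsenEquiv T (T ∘ σ) := by
  induction σ using Equiv.Perm.swap_induction_on generalizing T with
  | one => rfl
  | swap_mul σ i j hij ih =>
    simpa [comp_assoc] using (comp_swap T hij).trans (ih (T ∘ Equiv.swap i j))

theorem update_of_eq_or_eq_inv {T : Fin n → G} {i : Fin n} {u : G} (hu : T i = u ∨ T i = u⁻¹) :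
    NielsenEquiv T (update T i u) := by
  rcases hu with rfl | hu
  · simpa using refl T
  · simpa [hu] using update_inv T i

theorem update_mul_of_eq_or_eq_inv {T : Fin n → G} {i j : Fin n} (hij : i ≠ j) {u v : G}
    (hu : T i = u ∨ T i = u⁻¹) (hv : T j = v ∨ T j = v⁻¹) :
    NielsenEquiv T (update T i (u * v)) := by
  have hright : NielsenEquiv (update T i u) (update T i (u * v)) := by
    rcases hv with rfl | hv
    · simpa [hij.symm] using update_mul (update T i u) hij
    · simpa [hij.symm, hv] using update_mul_inv (update T i u) hij
  exact (update_of_eq_or_eq_inv hu).trans hright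

theorem of_forall_eq_or_eq_inv {T T' : Fin n → G} (h : ∀ i, T i = T' i ∨ T i = (T' i)⁻¹) :
    NielsenEquiv T T' := by
  suffices ∀ (s : Finset (Fin n)) (T : Fin n → G), (∀ i, T i = T' i ∨ T i = (T' i)⁻¹) →
      (∀ i ∉ s, T i = T' i) → NielsenEquiv T T' from
    this Finset.univ T h (by simp)
  intro s
  induction s using Finset.induction_on with
  | empty =>
    intro T _ hT
    rw [funext fun i => hT i (Finset.notMem_empty i)]
  | insert a s _ ih =>
    intro T h hs
    refine (update_of_eq_or_eq_inv (h a)).trans (ih _ (fun i => ?_) (fun i hi => ?_))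
    · rcases eq_or_ne i a with rfl | hia <;> simp [*]
    · rcases eq_or_ne i a with rfl | hia
      · simp
      · simpa [hia] using hs i (by simp [hia, hi])

theorem _root_.NielsenStep.closure_range_le {T T' : Fin n → G} (h : NielsenStep T T') :
    Subgroup.closure (Set.range T') ≤ Subgroup.closure (Set.range T) := by
  have mem (l : Fin n) : T l ∈ Subgroup.closure (Set.range T) :=
    Subgroup.subset_closure (Set.mem_range_self l)
  rw [Subgroup.closure_le]
  rintro _ ⟨l, rfl⟩
  cases h with
  | inv i => rcases eq_or_ne l i with rfl | h <;> simp [*]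
  | swap i j _ => exact mem _
  | mul i j _ => rcases eq_or_ne l i with rfl | h <;> simp [*, mul_mem]

theorem closure_range_le {T T' : Fin n → G} (h : NielsenEquiv T T') :
    Subgroup.closure (Set.range T') ≤ Subgroup.closure (Set.range T) := by
  induction h with
  | refl => rfl
  | tail _ hstep ih => exact hstep.closure_range_le.trans ih

theorem closure_range_eq {T T' : Fin n → G} (h : NielsenEquiv T T') :
    Subgroup.closure (Set.range T') = Subgroup.closure (Set.range T) :=
  le_antisymm h.closure_range_le h.symm.closure_range_le

theorem of_injective_of_eq_or_eq_inv {k : ℕ} {T : Fin n → G} (x : Fin k → G)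
    {f : Fin k → Fin n} (hf : Injective f) (hTf : ∀ a, T (f a) = x a ∨ T (f a) = (x a)⁻¹)
    (hT₁ : ∀ i, i ∉ Set.range f → T i = 1) :
    NielsenEquiv T (fun i => if h : (i : ℕ) < k then x ⟨i, h⟩ else 1) := by
  have hkn : k ≤ n := by simpa using Fintype.card_le_of_injective f hf
  obtain ⟨σ, hσ⟩ := Equiv.Perm.exists_extending_pair _ f (Fin.castLE_injective hkn) hf
  refine (comp_perm T σ).trans (of_forall_eq_or_eq_inv fun i => ?_)
  by_cases hi : (i : ℕ) < k
  · simpa [hi, ← hσ ⟨i, hi⟩] using hTf ⟨i, hi⟩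
  · refine Or.inl ?_
    rw [comp_apply, dif_neg hi, hT₁]
    rintro ⟨a, ha⟩
    rw [← hσ a, σ.injective.eq_iff] at ha
    exact hi (ha ▸ a.isLt)

end NielsenEquiv

section SignedEntries

variable {G : Type*} [Group G] {n : ℕ}

def signedEntries (T : Fin n → G) : Set G := Set.range T ∪ (Set.range T)⁻¹

theorem mem_signedEntries {T : Fin n → G} {g : G} :
    g ∈ signedEntries T ↔ ∃ i, T i = g ∨ T i = g⁻¹ := by
  simp [signedEntries, exists_or]

theorem inv_mem_signedEntries {T : Fin n → G} {g : G} (h : g ∈ signedEntries T) :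
    g⁻¹ ∈ signedEntries T := by
  simpa [mem_signedEntries, or_comm] using h

theorem mem_submonoidClosure_signedEntries {T : Fin n → G}
    (hT : Subgroup.closure (Set.range T) = ⊤) (x : G) :
    x ∈ Submonoid.closure (signedEntries T) := by
  rw [signedEntries, ← Subgroup.closure_toSubmonoid, hT]
  trivial

end SignedEntries

section ReducedSeq

variable {G : Type*} [Group G]

def IsReducedSeq (S : Set G) (l : List G) : Prop :=
  (∀ g ∈ l, g ∈ S ∧ g ≠ 1) ∧ l.IsChain fun g h => g * h ≠ 1

theorem exists_isReducedSeq_prod_eq {S : Set G} :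
    ∀ l : List G, (∀ g ∈ l, g ∈ S) → ∃ l', IsReducedSeq S l' ∧ l'.prod = l.prod
  | [], _ => ⟨[], ⟨by simp, .nil⟩, rfl⟩
  | g :: l, hl => by
    obtain ⟨l', ⟨hmem, hchain⟩, hprod⟩ :=
      exists_isReducedSeq_prod_eq l fun x hx => hl x (List.mem_cons_of_mem g hx)
    have hgS : g ∈ S := hl g List.mem_cons_self
    by_cases hg : g = 1
    · exact ⟨l', ⟨hmem, hchain⟩, by simp [hg, hprod]⟩
    rcases l' with _ | ⟨h, t⟩
    · exact ⟨[g], ⟨by simp [hgS, hg], .singleton g⟩, by simp [← hprod]⟩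
    by_cases hgh : g * h = 1
    · refine ⟨t, ⟨fun x hx => hmem x (List.mem_cons_of_mem h hx), hchain.tail⟩, ?_⟩
      rw [List.prod_cons, ← hprod, List.prod_cons, ← mul_assoc, hgh, one_mul]
    · refine ⟨g :: h :: t, ⟨?_, hchain.cons_cons hgh⟩, by simp [← hprod]⟩
      simpa [hgS, hg] using hmem

theorem exists_isReducedSeq_of_mem_closure {S : Set G} {x : G} (hx : x ∈ Submonoid.closure S) :
    ∃ l, IsReducedSeq S l ∧ l.prod = x := by
  obtain ⟨l, hl, rfl⟩ := Submonoid.exists_list_of_mem_closure hx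
  exact exists_isReducedSeq_prod_eq l hl

end ReducedSeq

namespace FreeGroup

variable {α : Type*}

theorem IsReduced.eq_nil_of_append_invRev {L : List (α × Bool)} (h : IsReduced (L ++ invRev L)) :
    L = [] := by
  rcases L.eq_nil_or_concat' with rfl | ⟨M, z, rfl⟩
  · rfl
  · have hz : IsReduced [z, (z.1, !z.2)] := h.infix ⟨M, invRev M, by simp [invRev]⟩
    simp at hz

theorem mk_singleton_eq_of_or_eq_inv (z : α × Bool) : mk [z] = of z.1 ∨ mk [z] = (of z.1)⁻¹ := by
  rcases z with ⟨a, _ | _⟩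
  · exact Or.inr (by simp [of, inv_mk, invRev])
  · exact Or.inl rfl

theorem eq_of_eq_or_eq_inv_of {a b : α} {x : FreeGroup α}
    (ha : x = of a ∨ x = (of a)⁻¹) (hb : x = of b ∨ x = (of b)⁻¹) : a = b := by
  classical
  rcases ha with rfl | rfl <;> rcases hb with hb | hb
  · exact of_injective hb
  · simpa [invRev] using congrArg toWord hb
  · simpa [invRev] using congrArg toWord hb
  · exact of_injective (inv_injective hb)

section WordCode

variable [Fintype α]

/-- Most significant letter first, so that codes of words of equal length compare
lexicographically; the base exceeds every digit and `1`. -/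
noncomputable def wordCode (L : List (α × Bool)) : ℕ :=
  Nat.ofDigits (Fintype.card (α × Bool) + 2) (L.reverse.map fun p => Fintype.equivFin _ p)

theorem wordCode_append (L Q : List (α × Bool)) :
    wordCode (L ++ Q) = wordCode Q + (Fintype.card (α × Bool) + 2) ^ Q.length * wordCode L := by
  simp [wordCode, Nat.ofDigits_append]

theorem wordCode_append_lt_append {L L' : List (α × Bool)} (h : wordCode L < wordCode L')
    (Q : List (α × Bool)) : wordCode (L ++ Q) < wordCode (L' ++ Q) := by
  rw [wordCode_append, wordCode_append]
  gcongr

theorem eq_of_wordCode_eq {L L' : List (α × Bool)} (hlen : L.length = L'.length)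
    (h : wordCode L = wordCode L') : L = L' := by
  have digit_lt (M : List (α × Bool)) :
      ∀ d ∈ M.reverse.map fun p => (Fintype.equivFin (α × Bool) p : ℕ),
        d < Fintype.card (α × Bool) + 2 := by
    simp only [List.mem_map]
    rintro _ ⟨p, -, rfl⟩
    exact (Fin.is_lt _).trans (by omega)
  have hdigits := Nat.ofDigits_inj_of_len_eq (by omega) (by simpa using hlen)
    (digit_lt L) (digit_lt L') h
  have hinj : Injective fun p => (Fintype.equivFin (α × Bool) p : ℕ) :=
    Fin.val_injective.comp (Fintype.equivFin _).injective
  exact List.reverse_injective (List.map_injective_iff.mpr hinj hdigits)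

end WordCode

variable [DecidableEq α]

theorem IsReduced.exists_reduce_append {L₁ L₂ : List (α × Bool)} (h₁ : IsReduced L₁)
    (h₂ : IsReduced L₂) :
    ∃ A C B, L₁ = A ++ C ∧ L₂ = invRev C ++ B ∧ reduce (L₁ ++ L₂) = A ++ B := by
  induction L₂ generalizing L₁ with
  | nil => exact ⟨L₁, [], [], by simp, by simp [invRev], by simp [h₁.reduce_eq]⟩
  | cons y L₂ ih =>
    rcases L₁.eq_nil_or_concat' with rfl | ⟨M, z, rfl⟩
    · exact ⟨[], [], y :: L₂, by simp, by simp [invRev], by simp [h₂.reduce_eq]⟩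
    by_cases hzy : y = (z.1, !z.2)
    · obtain ⟨A, C, B, rfl, rfl, hAB⟩ :=
        ih (L₁ := M) (h₁.infix ⟨[], [z], by simp⟩) (h₂.infix ⟨[y], [], by simp⟩)
      refine ⟨A, C ++ [z], B, by simp, by simp [invRev, hzy], ?_⟩
      rw [← hAB, ← reduce.Step.eq (L₁ := A ++ C ++ (z.1, z.2) :: (z.1, !z.2) :: (invRev C ++ B))
        Red.Step.not]
      simp [hzy]
    · have hzy' : IsReduced ([z] ++ y :: L₂) := by
        refine isReduced_cons_cons.mpr ⟨fun h1 => ?_, h₂⟩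
        by_contra h2
        exact hzy (Prod.ext h1.symm (Bool.eq_not_iff.mpr (Ne.symm h2)))
      exact ⟨M ++ [z], [], y :: L₂, by simp, by simp [invRev],
        (h₁.append_overlap hzy' (by simp)).reduce_eq.trans (by simp)⟩

theorem exists_toWord_mul (x y : FreeGroup α) :
    ∃ A C B, x.toWord = A ++ C ∧ y.toWord = invRev C ++ B ∧ (x * y).toWord = A ++ B := by
  rw [toWord_mul]
  exact isReduced_toWord.exists_reduce_append isReduced_toWord

theorem norm_mul_le_of_toWord_eq {x y : FreeGroup α} {D C E : List (α × Bool)}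
    (hx : x.toWord = D ++ C) (hy : y.toWord = invRev C ++ E) :
    norm (x * y) ≤ D.length + E.length := by
  have hxy : x * y = mk (D ++ E) := by
    rw [← mk_toWord (x := x), ← mk_toWord (x := y), hx, hy, ← mul_mk, ← mul_mk, ← mul_mk,
      ← inv_mk]
    group
  simpa [hxy] using norm_mk_le (L₁ := D ++ E)

theorem norm_lt_norm_mul_self {x : FreeGroup α} (hx : x ≠ 1) : norm x < norm (x * x) := by
  -- `x = c r c⁻¹` with `r` cyclically reduced and nonempty, and `x * x = c r r c⁻¹` is reduced
  open reduceCyclically in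
  have hx₁ := conj_conjugator_reduceCyclically x.toWord
  have hx₂ : (x * x).toWord = conjugator x.toWord ++
      (List.replicate 2 (reduceCyclically x.toWord)).flatten ++ invRev (conjugator x.toWord) := by
    rw [← pow_two, toWord_pow, reduce_flatten_replicate_succ isReduced_toWord 1]
  have hr : reduceCyclically x.toWord ≠ [] := by
    intro hr
    rw [hr, List.append_nil] at hx₁
    have hc := (hx₁ ▸ isReduced_toWord (x := x)).eq_nil_of_append_invRev
    exact hx (toWord_eq_nil_iff.mp (by simpa [hc] using hx₁.symm))
  have hlen := congrArg List.length hx₁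
  have hr_len := List.length_pos_iff.mpr hr
  simp only [norm, hx₂, List.length_append, invRev_length, List.length_flatten,
    List.reduceReplicate, List.map_cons, List.map_nil, List.sum_cons, List.sum_nil] at hlen ⊢
  omega

theorem exists_toWord_of_norm_mul_eq {x y : FreeGroup α} (h : norm (x * y) = norm x) :
    ∃ P L R, x.toWord = P ++ invRev L ∧ y.toWord = L ++ R ∧ (x * y).toWord = P ++ R ∧
      L.length = R.length := by
  obtain ⟨A, C, B, hx, hy, hxy⟩ := exists_toWord_mul x y
  refine ⟨A, invRev C, B, by rw [hx, invRev_invRev], hy, hxy, ?_⟩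
  simp only [norm, hx, hxy, List.length_append, invRev_length] at h ⊢
  omega

theorem exists_eq_of_or_eq_inv_of_norm_eq_one {x : FreeGroup α} (h : norm x = 1) :
    ∃ a, x = of a ∨ x = (of a)⁻¹ := by
  obtain ⟨z, hz⟩ := List.length_eq_one_iff.mp h
  exact ⟨z.1, by simpa [← hz, mk_toWord] using mk_singleton_eq_of_or_eq_inv z⟩

variable [Fintype α]

noncomputable def halfKey (x : FreeGroup α) : ℕ :=
  wordCode (x.toWord.take ((norm x + 1) / 2)) + wordCode (x⁻¹.toWord.take ((norm x + 1) / 2))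

theorem halfKey_inv (x : FreeGroup α) : halfKey x⁻¹ = halfKey x := by
  rw [halfKey, halfKey, inv_inv, norm_inv_eq, add_comm]

theorem halfKey_lt_of_toWord_eq {x y : FreeGroup α} {P X Y : List (α × Bool)}
    (hx : x.toWord = P ++ invRev X) (hy : y.toWord = P ++ invRev Y)
    (hXY : X.length = Y.length) (hXP : X.length ≤ P.length) (hlt : wordCode Y < wordCode X) :
    halfKey y < halfKey x := by
  have hnorm : norm y = norm x := by simp [norm, hx, hy, hXY]
  have hinv (z : FreeGroup α) (Z : List (α × Bool)) (hz : z.toWord = P ++ invRev Z) :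
      z⁻¹.toWord = Z ++ invRev P := by
    rw [toWord_inv, hz, invRev_append, invRev_invRev]
  set h := (norm x + 1) / 2
  have hXh : X.length ≤ h := by simp only [h, norm, hx, List.length_append, invRev_length]; omega
  have hhP : h ≤ P.length := by simp only [h, norm, hx, List.length_append, invRev_length]; omega
  rw [halfKey, halfKey, hnorm, hx, hy, hinv x X hx, hinv y Y hy,
    List.take_append_of_le_length hhP, List.take_append_of_le_length hhP, List.take_append,
    List.take_append, List.take_of_length_le hXh, List.take_of_length_le (l := Y) (by omega), hXY]
  exact Nat.add_lt_add_left (wordCode_append_lt_append hlt _) _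

noncomputable def wordKey (x : FreeGroup α) : ℕ ×ₗ ℕ := toLex (norm x, halfKey x)

theorem wordKey_inv (x : FreeGroup α) : wordKey x⁻¹ = wordKey x := by
  rw [wordKey, wordKey, norm_inv_eq, halfKey_inv]

theorem norm_le_norm_of_wordKey_le {x y : FreeGroup α} (h : wordKey x ≤ wordKey y) :
    norm x ≤ norm y :=
  Prod.Lex.monotone_fst _ _ h

theorem wordKey_lt_of_norm_lt {x y : FreeGroup α} (h : norm x < norm y) : wordKey x < wordKey y :=
  Prod.Lex.toLex_lt_toLex.mpr (Or.inl h)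

theorem wordKey_lt_of_halfKey_lt {x y : FreeGroup α} (hn : norm x = norm y)
    (h : halfKey x < halfKey y) : wordKey x < wordKey y :=
  Prod.Lex.toLex_lt_toLex.mpr (Or.inr ⟨hn, h⟩)

theorem wordKey_mul_lt {x y : FreeGroup α} {P L R : List (α × Bool)}
    (hx : x.toWord = P ++ invRev L) (hxy : (x * y).toWord = P ++ R)
    (hLR : L.length = R.length) (hLP : L.length ≤ P.length)
    (hlt : wordCode (invRev R) < wordCode L) : wordKey (x * y) < wordKey x :=
  wordKey_lt_of_halfKey_lt (by simp [norm, hx, hxy, hLR])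
    (halfKey_lt_of_toWord_eq hx (by rwa [invRev_invRev]) (by simp [hLR]) hLP hlt)

end FreeGroup

theorem Finset.sum_comp_update_add {ι β : Type*} [Fintype ι] [DecidableEq ι] (f : β → ℕ)
    (T : ι → β) (i : ι) (v : β) :
    ∑ j, f (update T i v j) + f (T i) = ∑ j, f (T j) + f v := by
  simp_rw [apply_update (fun _ => f), Finset.sum_update_of_mem (Finset.mem_univ i),
    ← Finset.add_sum_erase _ _ (Finset.mem_univ i), Finset.sdiff_singleton_eq_erase]
  ring

open FreeGroup

section Minimal

variable {α : Type*} [Fintype α] [DecidableEq α] {n : ℕ}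

noncomputable def complexity (T : Fin n → FreeGroup α) : ℕ ×ₗ ℕ :=
  toLex (∑ i, norm (T i), ∑ i, halfKey (T i))

theorem complexity_update_lt {T : Fin n → FreeGroup α} {i : Fin n} {g : FreeGroup α}
    (h : wordKey g < wordKey (T i)) : complexity (update T i g) < complexity T := by
  have hnorm := Finset.sum_comp_update_add norm T i g
  have hkey := Finset.sum_comp_update_add halfKey T i g
  rw [wordKey, wordKey, Prod.Lex.toLex_lt_toLex] at h
  rw [complexity, complexity, Prod.Lex.toLex_lt_toLex]
  dsimp only at h ⊢
  omega

def IsNielsenMinimal (T : Fin n → FreeGroup α) : Prop :=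
  ∀ T', NielsenEquiv T T' → complexity T ≤ complexity T'

theorem exists_isNielsenMinimal (T : Fin n → FreeGroup α) :
    ∃ T₀, NielsenEquiv T T₀ ∧ IsNielsenMinimal T₀ := by
  obtain ⟨T₀, hT₀, hmin⟩ := (InvImage.wf complexity wellFounded_lt).has_min
    {T' | NielsenEquiv T T'} ⟨T, .refl T⟩
  exact ⟨T₀, hT₀, fun T' h => not_lt.mp (hmin T' (NielsenEquiv.trans hT₀ h))⟩

end Minimal

section SurvivingHalf

variable {α : Type*} [DecidableEq α]

/-- Invariant of a product `p` of elements of `S` with last factor `v`: a suffix `s` of `v`, at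
least half of it, survives at the end of the reduced word of `p` after at least `m` letters; if
exactly half survives, some `t ∈ S` (the previous factor) cancels exactly half of `v`. -/
def HasSurvivingHalf (S : Set (FreeGroup α)) (p v : FreeGroup α) (m : ℕ) : Prop :=
  ∃ r s, p.toWord = r ++ s ∧ s <:+ v.toWord ∧ norm v ≤ 2 * s.length ∧ m ≤ r.length ∧
    (norm v = 2 * s.length → ∃ t ∈ S, t * v ≠ 1 ∧ norm (t * v) = norm t)

theorem hasSurvivingHalf_self (S : Set (FreeGroup α)) {v : FreeGroup α} (hv : v ≠ 1) :
    HasSurvivingHalf S v v 0 := by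
  refine ⟨[], v.toWord, rfl, List.suffix_refl _, by simp only [FreeGroup.norm]; omega, le_rfl,
    fun h => ?_⟩
  exact absurd (FreeGroup.norm_eq_zero.mp (by simp only [FreeGroup.norm] at h ⊢; omega)) hv

end SurvivingHalf

namespace IsNielsenMinimal

variable {α : Type*} [Fintype α] [DecidableEq α] {n : ℕ} {T : Fin n → FreeGroup α}

theorem wordKey_le_mul_of_ne (hT : IsNielsenMinimal T) {i j : Fin n} (hij : i ≠ j)
    {u v : FreeGroup α} (hu : T i = u ∨ T i = u⁻¹) (hv : T j = v ∨ T j = v⁻¹) :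
    wordKey u ≤ wordKey (u * v) := by
  have hkey : wordKey (T i) = wordKey u := by rcases hu with h | h <;> simp [h, wordKey_inv]
  refine not_lt.mp fun hlt => ?_
  exact (hT _ (NielsenEquiv.update_mul_of_eq_or_eq_inv hij hu hv)).not_gt
    (complexity_update_lt (hkey ▸ hlt))

theorem eq_one_of_eq_or_eq_inv (hT : IsNielsenMinimal T) {i j : Fin n} (hij : i ≠ j)
    (h : T i = T j ∨ T i = (T j)⁻¹) : T i = 1 := by
  have hle : norm (T i) ≤ norm (1 : FreeGroup α) := by
    rcases h with h | h
    · simpa [h] using norm_le_norm_of_wordKey_le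
        (hT.wordKey_le_mul_of_ne hij (Or.inl rfl) (Or.inr (inv_inv (T j)).symm))
    · simpa [h] using norm_le_norm_of_wordKey_le
        (hT.wordKey_le_mul_of_ne hij (Or.inl rfl) (Or.inl rfl))
  simpa [FreeGroup.norm_eq_zero] using hle

theorem wordKey_le_mul (hT : IsNielsenMinimal T) {u v : FreeGroup α}
    (hu : u ∈ signedEntries T) (hv : v ∈ signedEntries T) (huv : u * v ≠ 1) :
    wordKey u ≤ wordKey (u * v) := by
  by_cases huv' : u = v
  · subst huv'
    exact (wordKey_lt_of_norm_lt (norm_lt_norm_mul_self fun h => huv (by simp [h]))).le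
  obtain ⟨i, hi⟩ := mem_signedEntries.mp hu
  obtain ⟨j, hj⟩ := mem_signedEntries.mp hv
  refine hT.wordKey_le_mul_of_ne (fun hij => ?_) hi hj
  subst hij
  rcases hi with hi | hi <;> rcases hj with hj | hj
  · exact huv' (hi.symm.trans hj)
  · exact huv (by rw [← hi, hj, inv_mul_cancel])
  · exact huv (by rw [← inv_inv u, ← hi, hj, inv_mul_cancel])
  · exact huv' (inv_injective (hi.symm.trans hj))

theorem norm_left_le_norm_mul (hT : IsNielsenMinimal T) {u v : FreeGroup α}
    (hu : u ∈ signedEntries T) (hv : v ∈ signedEntries T) (huv : u * v ≠ 1) :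
    norm u ≤ norm (u * v) :=
  norm_le_norm_of_wordKey_le (hT.wordKey_le_mul hu hv huv)

theorem norm_right_le_norm_mul (hT : IsNielsenMinimal T) {u v : FreeGroup α}
    (hu : u ∈ signedEntries T) (hv : v ∈ signedEntries T) (huv : u * v ≠ 1) :
    norm v ≤ norm (u * v) := by
  have := hT.norm_left_le_norm_mul (inv_mem_signedEntries hv) (inv_mem_signedEntries hu)
    (by rwa [← mul_inv_rev, inv_ne_one])
  rwa [← mul_inv_rev, norm_inv_eq, norm_inv_eq] at this

theorem norm_mul_ne_of_norm_mul_eq (hT : IsNielsenMinimal T) {u v w : FreeGroup α}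
    (hu : u ∈ signedEntries T) (hv : v ∈ signedEntries T) (hw : w ∈ signedEntries T)
    (hv₁ : v ≠ 1) (huv : u * v ≠ 1) (hvw : v * w ≠ 1) (huv_norm : norm (u * v) = norm u) : norm (v * w) ≠ norm w := by
  intro hvw_norm
  have hw' := inv_mem_signedEntries hw
  have hv' := inv_mem_signedEntries hv
  have hwv : w⁻¹ * v⁻¹ ≠ 1 := by rwa [← mul_inv_rev, inv_ne_one]
  obtain ⟨P, L, R, hu_word, hv_word, huv_word, hLR⟩ := exists_toWord_of_norm_mul_eq huv_norm
  obtain ⟨P', L', R', hw_word, hv_word', hwv_word, hLR'⟩ := exists_toWord_of_norm_mul_eq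
    (x := w⁻¹) (y := v⁻¹) (by rw [← mul_inv_rev, norm_inv_eq, norm_inv_eq, hvw_norm])
  obtain ⟨rfl, rfl⟩ : L' = invRev R ∧ R' = invRev L := by
    rw [toWord_inv, hv_word, invRev_append] at hv_word'
    have hlen := congrArg List.length hv_word'
    simp only [List.length_append, invRev_length] at hlen
    exact List.append_inj hv_word'.symm (by simp only [invRev_length]; omega)
  have hLP : L.length ≤ P.length := by
    have := hT.norm_right_le_norm_mul hu hv huv
    simp only [FreeGroup.norm, hv_word, huv_word, List.length_append] at this
    omega
  have hLP' : (invRev R).length ≤ P'.length := by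
    have := hT.norm_right_le_norm_mul hw' hv' hwv
    simp only [FreeGroup.norm, hv_word', hwv_word, List.length_append] at this
    omega
  have hLR_ne : L ≠ invRev R := by
    intro hL
    have hred : IsReduced (L ++ invRev L) := by
      rw [hL, invRev_invRev, ← hL, ← hv_word]
      exact isReduced_toWord
    have hL₀ := hred.eq_nil_of_append_invRev
    exact hv₁ (toWord_eq_nil_iff.mp (by simp_all [invRev]))
  -- `v = L ++ R` with halves of equal length: if `R⁻¹` precedes `L` then `u * v` undercuts `u`,
  -- otherwise `w⁻¹ * v⁻¹` undercuts `w⁻¹`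
  rcases lt_or_gt_of_ne (mt (eq_of_wordCode_eq (by simp [hLR])) hLR_ne) with hlt | hlt
  · refine (wordKey_mul_lt hw_word hwv_word hLR' hLP' ?_).not_ge (hT.wordKey_le_mul hw' hv' hwv)
    rwa [invRev_invRev]
  · exact (wordKey_mul_lt hu_word huv_word hLR hLP hlt).not_ge (hT.wordKey_le_mul hu hv huv)

theorem hasSurvivingHalf_mul (hT : IsNielsenMinimal T) {p v u : FreeGroup α} {m : ℕ}
    (h : HasSurvivingHalf (signedEntries T) p v m) (hv : v ∈ signedEntries T)
    (hu : u ∈ signedEntries T) (hv₁ : v ≠ 1) (hvu : v * u ≠ 1) :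
    HasSurvivingHalf (signedEntries T) (p * u) u (m + 1) := by
  obtain ⟨r, s, hp, hs, hvs, hm, hhalf⟩ := h
  obtain ⟨A, C, B, hpA, hu_word, hpu⟩ := exists_toWord_mul p u
  have hv_le := hT.norm_left_le_norm_mul hv hu hvu
  have hu_le := hT.norm_right_le_norm_mul hv hu hvu
  have hp_len := congrArg List.length (hp.symm.trans hpA)
  simp only [FreeGroup.norm, hu_word, List.length_append, invRev_length] at hv_le hu_le hvs hp_len
  -- if `u` cancelled all of `s`, then `v` would lose exactly half of its letters both to the
  -- previous factor and to `u`
  have hCs : C.length < s.length := by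
    refine not_le.mp fun hsC => ?_
    obtain ⟨C₁, rfl⟩ := List.suffix_of_suffix_length_le ⟨r, hp.symm⟩ ⟨A, hpA.symm⟩ hsC
    obtain ⟨D, hD⟩ := hs
    have hvu_le := norm_mul_le_of_toWord_eq hD.symm (y := u) (E := invRev C₁ ++ B)
      (by rw [hu_word, invRev_append, List.append_assoc])
    have hv_len := congrArg List.length hD
    simp only [FreeGroup.norm, List.length_append, invRev_length] at hvu_le hv_len hu_le
    obtain ⟨t, ht, htv, htv_norm⟩ := hhalf (by simp only [FreeGroup.norm]; omega)
    refine hT.norm_mul_ne_of_norm_mul_eq ht hv hu hv₁ htv hvu htv_norm ?_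
    simp only [FreeGroup.norm, hu_word, List.length_append, invRev_length]
    omega
  obtain ⟨D, hD⟩ := (List.suffix_of_suffix_length_le ⟨A, hpA.symm⟩ ⟨r, hp.symm⟩ hCs.le).trans hs
  have hvu_le := norm_mul_le_of_toWord_eq hD.symm hu_word
  have hv_len := congrArg List.length hD
  simp only [FreeGroup.norm, List.length_append] at hvu_le hv_len
  refine ⟨A, B, hpu, ⟨invRev C, hu_word.symm⟩, ?_, by omega, fun hu_half => ⟨v, hv, hvu, ?_⟩⟩
  · simp only [FreeGroup.norm, hu_word, List.length_append, invRev_length]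
    omega
  · simp only [FreeGroup.norm, hu_word, List.length_append, invRev_length] at hu_half ⊢
    omega

theorem hasSurvivingHalf_prod (hT : IsNielsenMinimal T) :
    ∀ (M : List (FreeGroup α)) (u : FreeGroup α), IsReducedSeq (signedEntries T) (M ++ [u]) →
      HasSurvivingHalf (signedEntries T) (M ++ [u]).prod u M.length := by
  intro M
  induction M using List.reverseRecOn with
  | nil => exact fun u hl => by simpa using hasSurvivingHalf_self _ (hl.1 u (by simp)).2
  | append_singleton M v ih =>
    intro u ⟨hmem, hchain⟩
    have hprefix : IsReducedSeq (signedEntries T) (M ++ [v]) :=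
      ⟨fun g hg => hmem g (List.mem_append_left _ hg), (List.isChain_append.mp hchain).1⟩
    have hvu : v * u ≠ 1 := (List.isChain_append.mp hchain).2.2 v (by simp) u rfl
    rw [List.prod_append, List.prod_singleton, List.length_append, List.length_singleton]
    exact hT.hasSurvivingHalf_mul (ih v hprefix) (hmem v (by simp)).1 (hmem u (by simp)).1
      (hmem v (by simp)).2 hvu

theorem length_le_norm_prod (hT : IsNielsenMinimal T) {l : List (FreeGroup α)}
    (hl : IsReducedSeq (signedEntries T) l) : l.length ≤ norm l.prod := by
  rcases l.eq_nil_or_concat' with rfl | ⟨M, u, rfl⟩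
  · simp
  obtain ⟨r, s, hp, -, hus, hr, -⟩ := hT.hasSurvivingHalf_prod M u hl
  have hu : norm u ≠ 0 := mt FreeGroup.norm_eq_zero.mp (hl.1 u (by simp)).2
  simp only [FreeGroup.norm, hp, List.length_append, List.length_singleton] at hu hus ⊢
  omega

theorem of_mem_signedEntries (hT : IsNielsenMinimal T) (hgen : Subgroup.closure (Set.range T) = ⊤)
    (a : α) : of a ∈ signedEntries T := by
  obtain ⟨l, hl, hprod⟩ :=
    exists_isReducedSeq_of_mem_closure (mem_submonoidClosure_signedEntries hgen (of a))
  have hlen := hT.length_le_norm_prod hl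
  rw [hprod, norm_of] at hlen
  match l, hl, hprod, hlen with
  | [], _, hprod, _ => exact absurd hprod (one_ne_of a)
  | [g], hl, hprod, _ => simpa [← hprod] using (hl.1 g (by simp)).1
  | _ :: _ :: _, _, _, hlen => simp at hlen

theorem norm_le_one (hT : IsNielsenMinimal T) (hgen : Subgroup.closure (Set.range T) = ⊤)
    (i : Fin n) : norm (T i) ≤ 1 := by
  refine not_lt.mp fun hlt => ?_
  obtain ⟨Z, z, hZ⟩ := (T i).toWord.eq_nil_or_concat'.resolve_left
    fun h => by simp [FreeGroup.norm, h] at hlt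
  -- multiplying by the inverse of its last letter shortens `T i`
  have hg : (mk [z])⁻¹ ∈ signedEntries T := by
    refine inv_mem_signedEntries ?_
    rcases mk_singleton_eq_of_or_eq_inv z with h | h <;> rw [h]
    · exact hT.of_mem_signedEntries hgen z.1
    · exact inv_mem_signedEntries (hT.of_mem_signedEntries hgen z.1)
  have hg_word : (mk [z])⁻¹.toWord = invRev [z] ++ [] := by
    rw [toWord_inv, toWord_mk, IsReduced.singleton.reduce_eq, List.append_nil]
  have hne : T i * (mk [z])⁻¹ ≠ 1 := fun h => by
    simp [eq_inv_of_mul_eq_one_left h, FreeGroup.norm, toWord_mk,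
      IsReduced.singleton.reduce_eq] at hlt
  have hle := hT.norm_left_le_norm_mul (mem_signedEntries.mpr ⟨i, Or.inl rfl⟩) hg hne
  have := norm_mul_le_of_toWord_eq hZ hg_word
  simp only [FreeGroup.norm, hZ, List.length_append, List.length_singleton, List.length_nil]
    at hle this
  omega

theorem nielsenEquiv_basis {k : ℕ} {T : Fin n → FreeGroup (Fin k)} (hT : IsNielsenMinimal T)
    (hgen : Subgroup.closure (Set.range T) = ⊤) :
    k ≤ n ∧ NielsenEquiv T (fun i => if h : (i : ℕ) < k then of (⟨i, h⟩ : Fin k) else 1) := by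
  choose f hf using fun a => mem_signedEntries.mp (hT.of_mem_signedEntries hgen a)
  have hf_inj : Injective f := fun a b hab =>
    eq_of_eq_or_eq_inv_of (hf a) (by rw [hab]; exact hf b)
  refine ⟨by simpa using Fintype.card_le_of_injective f hf_inj,
    NielsenEquiv.of_injective_of_eq_or_eq_inv _ hf_inj hf fun i hi => ?_⟩
  rcases Nat.le_one_iff_eq_zero_or_eq_one.mp (hT.norm_le_one hgen i) with h₀ | h₁
  · exact FreeGroup.norm_eq_zero.mp h₀
  obtain ⟨a, ha⟩ := exists_eq_of_or_eq_inv_of_norm_eq_one h₁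
  refine hT.eq_one_of_eq_or_eq_inv (j := f a) (fun h => hi ⟨a, h.symm⟩) ?_
  rcases ha with ha | ha <;> rcases hf a with hb | hb <;> simp [ha, hb]

end IsNielsenMinimal

/-- **Nielsen's theorem.** Every generating `n`-tuple of the free group on `x₁, …, x_k`
satisfies `n ≥ k` and is Nielsen equivalent to `(x₁, …, x_k, 1, …, 1)`.  In particular,
any two generating `n`-tuples of a free group are Nielsen equivalent. -/
theorem nielsen_free_group (k : ℕ) {n : ℕ} :
    (∀ T : Fin n → FreeGroup (Fin k),
      Subgroup.closure (Set.range T) = ⊤ →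
        k ≤ n ∧
        NielsenEquiv T
          (fun i => if h : (i : ℕ) < k then FreeGroup.of (⟨(i : ℕ), h⟩ : Fin k) else 1)) ∧
    (∀ T T' : Fin n → FreeGroup (Fin k),
      Subgroup.closure (Set.range T) = ⊤ → Subgroup.closure (Set.range T') = ⊤ →
        NielsenEquiv T T') := by
  have basis (T : Fin n → FreeGroup (Fin k)) (hT : Subgroup.closure (Set.range T) = ⊤) :
      k ≤ n ∧ NielsenEquiv T
        (fun i => if h : (i : ℕ) < k then FreeGroup.of (⟨(i : ℕ), h⟩ : Fin k) else 1) := by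
    obtain ⟨T₀, hTT₀, hT₀⟩ := exists_isNielsenMinimal T
    obtain ⟨hkn, hT₀std⟩ := hT₀.nielsenEquiv_basis (hTT₀.closure_range_eq.trans hT)
    exact ⟨hkn, hTT₀.trans hT₀std⟩
  exact ⟨basis, fun T T' hT hT' => (basis T hT).2.trans (basis T' hT').2.symm⟩
end

section
/- Let g ≥ 0, r ≥ 0 and p₁,…,p_r ≥ 2 be integers with g ≥ 1 or r ≥ 4, and let G = ⟨a₁,…,a_{2g}, s₁,…,s_r | s₁^{p₁},…,s_r^{p_r}, [a₁,a₂]⋯[a_{2g−1},a_{2g}]·s₁⋯s_r⟩ be the fundamental group of a sufficiently large closed orientable 2-orbifold of genus g with cone points of orders p₁,…,p_r. Then G is not isomorphic to any free product of a family of cyclic groups. -/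
/-!
A homomorphism from a cyclic group `⟨d⟩` to the quotient `Q` of a central extension `E → Q` with
divisible kernel lifts to `E`: a lift `t` of the image of `d` is corrected by an `n`-th root of
the central element `t ^ n`, `n = orderOf d`. By the universal property the same holds for free
products of cyclic groups; they have no second cohomology with divisible coefficients.

The orbifold group fails this. Its free group maps by some `η` to a group `E` containing a central
copy of `ℚ`, with `η sᵢ ^ pᵢ = 1` and the long relator sent to `1 ∈ ℚ`: for `g ≥ 1` into the
rational Heisenberg group, for `r ≥ 4` into two copies of `(C_{p₁} * ⋯ * C_{p_r}) × ℚ` amalgamated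
along `ℤ × ℚ` by a shear that identifies `s₁s₂ · s₃s₄` with `1 ∈ ℚ`. A lift `σ` of the induced map
to `E ⧸ ℚ` would make `x ↦ σ(x)⁻¹ η(x)` a homomorphism from the free group to the central `ℚ`
extending `η` from the relators. It kills the `sᵢ` (as `ℚ` is torsion-free) and all commutators,
hence the long relator, which `η` sends to `1 ≠ 0`.
-/

universe u v

open scoped commutatorElement

/-- The relator `[a₁,a₂]⋯[a_{2g−1},a_{2g}] · s₁⋯s_r` in the free group on the generators
`a₁,…,a_{2g}` (left summand) and `s₁,…,s_r` (right summand). -/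
def closedOrbRelator (g r : ℕ) : FreeGroup (Fin (2 * g) ⊕ Fin r) :=
  (List.ofFn fun j : Fin g =>
      ⁅(FreeGroup.of (Sum.inl ⟨2 * (j : ℕ), by have := j.isLt; omega⟩) :
          FreeGroup (Fin (2 * g) ⊕ Fin r)),
        FreeGroup.of (Sum.inl ⟨2 * (j : ℕ) + 1, by have := j.isLt; omega⟩)⁆).prod *
    (List.ofFn fun i : Fin r => FreeGroup.of (Sum.inr i)).prod

/-- The relations `s₁^{p₁}, …, s_r^{p_r}` and `[a₁,a₂]⋯[a_{2g−1},a_{2g}]·s₁⋯s_r`. -/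
def closedOrbRels (g r : ℕ) (p : Fin r → ℕ) : Set (FreeGroup (Fin (2 * g) ⊕ Fin r)) :=
  {w | (∃ i : Fin r, w = FreeGroup.of (Sum.inr i) ^ p i) ∨ w = closedOrbRelator g r}

open Subgroup

/-- For a divisible abelian group `A`, lifting along all central extensions with kernel `A` says
`H²(Γ; A) = 0`. -/
def LiftsThroughDivisibleCentralExtensions (Γ : Type*) [Group Γ] : Prop :=
  ∀ ⦃E Q : Type⦄ [Group E] [Group Q] (π : E →* Q), Function.Surjective π →
    π.ker ≤ center E → (∀ x ∈ π.ker, ∀ n : ℕ, n ≠ 0 → ∃ y ∈ π.ker, y ^ n = x) →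
    ∀ φ : Γ →* Q, ∃ σ : Γ →* E, π.comp σ = φ

theorem Subgroup.normal_of_le_center {G : Type*} [Group G] {K : Subgroup G}
    (hK : K ≤ center G) : K.Normal :=
  ⟨fun n hn g => by rwa [mem_center_iff.mp (hK hn) g, mul_inv_cancel_right]⟩

theorem liftsThroughDivisibleCentralExtensions_of_zpowers_eq_top {Z : Type*} [Group Z] {d : Z}
    (hd : zpowers d = ⊤) : LiftsThroughDivisibleCentralExtensions Z := by
  intro E Q _ _ π hπ hcent hdiv φ
  have hψ : Function.Surjective (zpowersHom Z d) := fun z => by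
    obtain ⟨m, hm⟩ := mem_zpowers_iff.mp (hd ▸ mem_top z : z ∈ zpowers d)
    exact ⟨Multiplicative.ofAdd m, hm⟩
  obtain ⟨t, ht⟩ := hπ (φ d)
  -- `t * y⁻¹` is a lift of `φ d` whose order divides that of `d`.
  obtain ⟨y, hyK, hy⟩ : ∃ y ∈ π.ker, y ^ orderOf d = t ^ orderOf d := by
    rcases eq_or_ne (orderOf d) 0 with h0 | h0
    · exact ⟨1, one_mem _, by simp [h0]⟩
    · refine hdiv _ ?_ _ h0
      rw [MonoidHom.mem_ker, map_pow, ht, ← map_pow, pow_orderOf_eq_one, map_one]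
  have hker : (zpowersHom Z d).ker ≤ (zpowersHom E (t * y⁻¹)).ker := by
    rw [zpowersHom_ker_eq, zpowers_le, MonoidHom.mem_ker, zpowersHom_apply, toAdd_ofAdd,
      zpow_natCast, (show Commute t y from mem_center_iff.mp (hcent hyK) t).inv_right.mul_pow,
      inv_pow, hy, mul_inv_cancel]
  refine ⟨(zpowersHom Z d).liftOfRightInverse _ (Function.rightInverse_surjInv hψ) ⟨_, hker⟩, ?_⟩
  rw [← MonoidHom.cancel_right hψ, MonoidHom.comp_assoc, MonoidHom.liftOfRightInverse_comp]
  refine MonoidHom.ext_mint ?_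
  simp [ht, MonoidHom.mem_ker.mp hyK]

theorem Monoid.CoprodI.liftsThroughDivisibleCentralExtensions {ι : Type*} {D : ι → Type*}
    [∀ k, Group (D k)] (hD : ∀ k, LiftsThroughDivisibleCentralExtensions (D k)) :
    LiftsThroughDivisibleCentralExtensions (CoprodI D) := by
  intro E Q _ _ π hπ hcent hdiv φ
  choose σ hσ using fun k => hD k π hπ hcent hdiv (φ.comp CoprodI.of)
  exact ⟨CoprodI.lift σ, CoprodI.ext_hom _ _ fun k => by
    rw [MonoidHom.comp_assoc, CoprodI.lift_comp_of, hσ]⟩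

theorem LiftsThroughDivisibleCentralExtensions.of_mulEquiv {Γ Γ' : Type*} [Group Γ] [Group Γ']
    (e : Γ ≃* Γ') (h : LiftsThroughDivisibleCentralExtensions Γ') :
    LiftsThroughDivisibleCentralExtensions Γ := by
  intro E Q _ _ π hπ hcent hdiv φ
  obtain ⟨σ, hσ⟩ := h π hπ hcent hdiv (φ.comp e.symm.toMonoidHom)
  refine ⟨σ.comp e.toMonoidHom, ?_⟩
  rw [← MonoidHom.comp_assoc, hσ, MonoidHom.comp_assoc]
  ext x
  simp

theorem MonoidHom.exists_eq_mul_of_comp_eq {F E Q : Type*} [Group F] [Group E] [Group Q]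
    (π : E →* Q) (hcent : π.ker ≤ center E) {α β : F →* E} (h : π.comp α = π.comp β) :
    ∃ δ : F →* E, (∀ x, δ x ∈ π.ker) ∧ ∀ x, β x = α x * δ x := by
  have hker : ∀ x, (α x)⁻¹ * β x ∈ π.ker := fun x => by
    rw [MonoidHom.mem_ker, map_mul, map_inv, ← MonoidHom.comp_apply, h, MonoidHom.comp_apply,
      inv_mul_cancel]
  refine ⟨⟨⟨fun x => (α x)⁻¹ * β x, by simp⟩, fun x y => ?_⟩, hker, fun x => by simp⟩
  have hc := mem_center_iff.mp (hcent (hker x)) (α y)⁻¹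
  simp only [map_mul, mul_inv_rev]
  calc (α y)⁻¹ * (α x)⁻¹ * (β x * β y) = (α y)⁻¹ * ((α x)⁻¹ * β x) * β y := by group
    _ = (α x)⁻¹ * β x * ((α y)⁻¹ * β y) := by rw [hc, mul_assoc]

namespace Monoid.CoprodI

variable {ι : Type*} {M : ι → Type*} [∀ i, Monoid (M i)]

theorem NeWord.prod_ne_one {i j : ι} (w : NeWord M i j) : w.prod ≠ 1 := by
  classical
  intro h
  have : w.toWord = Word.empty := Word.equiv.symm.injective (h.trans Word.prod_empty.symm)
  exact w.toList_ne_nil (congrArg Word.toList this)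

theorem NeWord.exists_prod_eq_pow {i j : ι} (w : NeWord M i j) (hji : j ≠ i) (n : ℕ) :
    ∃ w' : NeWord M i j, w'.prod = w.prod ^ (n + 1) := by
  induction n with
  | zero => exact ⟨w, (pow_one _).symm⟩
  | succ n ih =>
    obtain ⟨w', hw'⟩ := ih
    exact ⟨w.append hji w', by rw [NeWord.append_prod, hw', ← pow_succ']⟩

theorem NeWord.orderOf_prod {i j : ι} (w : NeWord M i j) (hji : j ≠ i) : orderOf w.prod = 0 := by
  refine orderOf_eq_zero_iff'.mpr fun n hn => ?_
  obtain ⟨m, rfl⟩ := Nat.exists_eq_add_one_of_ne_zero hn.ne'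
  obtain ⟨w', hw'⟩ := w.exists_prod_eq_pow hji m
  exact hw' ▸ w'.prod_ne_one

theorem orderOf_of_mul_of {i j : ι} (hij : i ≠ j) {x : M i} {y : M j} (hx : x ≠ 1)
    (hy : y ≠ 1) : orderOf (of x * of y) = 0 := by
  simpa using ((NeWord.singleton x hx).append hij (NeWord.singleton y hy)).orderOf_prod hij.symm

end Monoid.CoprodI

@[ext]
structure Heisenberg (R : Type*) where
  x : R
  y : R
  z : R

namespace Heisenberg

variable {R : Type*} [CommRing R]

-- `⟨x, y, z⟩` is the unitriangular matrix `!![1, x, z; 0, 1, y; 0, 0, 1]`.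
instance : Mul (Heisenberg R) := ⟨fun u v => ⟨u.x + v.x, u.y + v.y, u.z + v.z + u.x * v.y⟩⟩
instance : One (Heisenberg R) := ⟨⟨0, 0, 0⟩⟩
instance : Inv (Heisenberg R) := ⟨fun u => ⟨-u.x, -u.y, u.x * u.y - u.z⟩⟩

theorem mul_def (u v : Heisenberg R) :
    u * v = ⟨u.x + v.x, u.y + v.y, u.z + v.z + u.x * v.y⟩ := rfl

theorem one_def : (1 : Heisenberg R) = ⟨0, 0, 0⟩ := rfl

theorem inv_def (u : Heisenberg R) : u⁻¹ = ⟨-u.x, -u.y, u.x * u.y - u.z⟩ := rfl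

instance : Group (Heisenberg R) where
  mul_assoc u v w := by ext <;> simp only [mul_def] <;> ring
  one_mul u := by ext <;> simp only [mul_def, one_def] <;> ring
  mul_one u := by ext <;> simp only [mul_def, one_def] <;> ring
  inv_mul_cancel u := by ext <;> simp only [mul_def, one_def, inv_def] <;> ring

def central : Multiplicative R →* Heisenberg R where
  toFun c := ⟨0, 0, c.toAdd⟩
  map_one' := rfl
  map_mul' c c' := by ext <;> simp only [mul_def, toAdd_mul] <;> ring

theorem central_injective : Function.Injective (central : Multiplicative R →* Heisenberg R) :=
  fun _ _ h => congrArg Heisenberg.z h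

theorem range_central_le_center :
    (central : Multiplicative R →* Heisenberg R).range ≤ center _ := by
  rintro _ ⟨c, rfl⟩
  refine mem_center_iff.mpr fun u => ?_
  ext <;> simp only [mul_def, central, MonoidHom.coe_mk, OneHom.coe_mk] <;> ring

theorem commutatorElement_eq_central :
    ⁅(⟨1, 0, 0⟩ : Heisenberg R), (⟨0, 1, 0⟩ : Heisenberg R)⁆ =
      central (Multiplicative.ofAdd 1) := by
  ext <;> simp [commutatorElement_def, mul_def, inv_def, central]

end Heisenberg

section ShearAmalgam

open Monoid

variable {M : Type*} [Group M]

/-- The edge group `ℤ × ℚ` is glued to `M × ℚ` along `(m, q) ↦ (a ^ m, q)` on one side and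
along the shear `(m, q) ↦ (b⁻¹ ^ m, m + q)` on the other, which makes `a * b` equal to the
central element `1 ∈ ℚ` of the amalgam. -/
def shearEdge (a b : M) (i : Bool) :
    Multiplicative ℤ × Multiplicative ℚ →* M × Multiplicative ℚ :=
  bif i then (zpowersHom M a).prodMap (MonoidHom.id _)
  else ((zpowersHom M b⁻¹).comp (MonoidHom.fst _ _)).prod
    ((Int.castAddHom ℚ).toMultiplicative.comp (MonoidHom.fst _ _) * MonoidHom.snd _ _)

abbrev ShearAmalgam (a b : M) : Type _ := PushoutI (shearEdge a b)

variable (a b : M)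

def shearLeft : M →* ShearAmalgam a b := (PushoutI.of true).comp (MonoidHom.inl _ _)

def shearRight : M →* ShearAmalgam a b := (PushoutI.of false).comp (MonoidHom.inl _ _)

def shearCentral : Multiplicative ℚ →* ShearAmalgam a b :=
  (PushoutI.base _).comp (MonoidHom.inr _ _)

theorem of_one_eq_shearCentral (i : Bool) (q : Multiplicative ℚ) :
    PushoutI.of (φ := shearEdge a b) i (1, q) = shearCentral a b q := by
  have : shearEdge a b i (1, q) = (1, q) := by cases i <;> simp [shearEdge]
  rw [← this, PushoutI.of_apply_eq_base]
  rfl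

theorem range_shearCentral_le_center : (shearCentral a b).range ≤ center _ := by
  rintro _ ⟨q, rfl⟩
  refine mem_center_iff.mpr fun x => ?_
  induction x using PushoutI.induction_on with
  | of i u =>
    rw [← of_one_eq_shearCentral a b i, ← map_mul, ← map_mul]
    exact congrArg _ (Prod.ext (by simp) (mul_comm _ _))
  | base h =>
    simp only [shearCentral, MonoidHom.comp_apply, ← map_mul]
    exact congrArg _ (mul_comm _ _)
  | mul x y hx hy => rw [mul_assoc, hy, ← mul_assoc, hx, mul_assoc]

theorem shearLeft_mul_shearRight : shearLeft a b a * shearRight a b b =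
    shearCentral a b (Multiplicative.ofAdd 1) := by
  have hA : shearEdge a b true (Multiplicative.ofAdd 1, 1) = (a, 1) := by simp [shearEdge]
  have hB : shearEdge a b false (Multiplicative.ofAdd 1, 1) = (b⁻¹, Multiplicative.ofAdd 1) := by
    simp [shearEdge]
  have hbase : PushoutI.of (φ := shearEdge a b) true (a, 1) =
      PushoutI.of false (b⁻¹, Multiplicative.ofAdd 1) := by
    rw [← hA, ← hB, PushoutI.of_apply_eq_base, PushoutI.of_apply_eq_base]
  simp only [shearLeft, shearRight, MonoidHom.comp_apply, MonoidHom.inl_apply]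
  rw [hbase, ← map_mul, Prod.mk_mul_mk, inv_mul_cancel, mul_one, of_one_eq_shearCentral]

variable {a b}

theorem shearEdge_injective (ha : orderOf a = 0) (hb : orderOf b = 0) (i : Bool) :
    Function.Injective (shearEdge a b i) := by
  have hzpow {c : M} (hc : orderOf c = 0) {m : ℤ} (h : c ^ m = 1) : m = 0 := by
    simpa [hc] using orderOf_dvd_iff_zpow_eq_one.mpr h
  refine (injective_iff_map_eq_one _).mpr fun ⟨m, q⟩ h => ?_
  have h1 := congrArg Prod.fst h
  have h2 := congrArg Prod.snd h
  cases i <;> simp [shearEdge] at h1 h2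
  · obtain rfl : m = 1 := hzpow hb h1
    simpa using h2
  · obtain rfl : m = 1 := hzpow ha h1
    rw [h2, Prod.mk_one_one]

theorem shearCentral_injective (ha : orderOf a = 0) (hb : orderOf b = 0) :
    Function.Injective (shearCentral a b) :=
  (PushoutI.base_injective (shearEdge_injective ha hb)).comp fun _ _ h => congrArg Prod.snd h

end ShearAmalgam

section ClosedOrbifold

variable {g r : ℕ} {p : Fin r → ℕ}

theorem map_closedOrbRelator {E : Type*} [Group E] (δ : FreeGroup (Fin (2 * g) ⊕ Fin r) →* E) :
    δ (closedOrbRelator g r) =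
      (List.ofFn fun j : Fin g =>
        ⁅δ (.of (.inl ⟨2 * (j : ℕ), by have := j.isLt; omega⟩)),
          δ (.of (.inl ⟨2 * (j : ℕ) + 1, by have := j.isLt; omega⟩))⁆).prod *
      (List.ofFn fun i : Fin r => δ (.of (.inr i))).prod := by
  simp only [closedOrbRelator, map_mul, map_list_prod, List.map_ofFn, Function.comp_def,
    map_commutatorElement]

theorem not_liftsThroughDivisibleCentralExtensions_closedOrb
    (hp : ∀ i, p i ≠ 0) {E : Type} [Group E] (ι : Multiplicative ℚ →* E)
    (hι : Function.Injective ι) (hcent : ι.range ≤ center E)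
    (η : FreeGroup (Fin (2 * g) ⊕ Fin r) →* E) (hs : ∀ i, η (.of (.inr i)) ^ p i = 1)
    (hrel : η (closedOrbRelator g r) = ι (.ofAdd 1)) :
    ¬ LiftsThroughDivisibleCentralExtensions (PresentedGroup (closedOrbRels g r p)) := by
  intro hlift
  have := normal_of_le_center hcent
  have hker : (QuotientGroup.mk' ι.range).ker = ι.range := QuotientGroup.ker_mk' _
  have hdiv : ∀ x ∈ ι.range, ∀ n : ℕ, n ≠ 0 → ∃ y ∈ ι.range, y ^ n = x := by
    rintro _ ⟨q, rfl⟩ n hn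
    refine ⟨ι (.ofAdd (q.toAdd / n)), ⟨_, rfl⟩, ?_⟩
    rw [← map_pow, ← ofAdd_nsmul, nsmul_eq_mul, mul_div_cancel₀ _ (Nat.cast_ne_zero.mpr hn)]
    rfl
  have hlift_η : FreeGroup.lift (fun x => (η (.of x) : E ⧸ ι.range)) =
      (QuotientGroup.mk' ι.range).comp η := FreeGroup.ext_hom _ _ fun x => by simp
  have hrels : ∀ w ∈ closedOrbRels g r p,
      FreeGroup.lift (fun x => (η (.of x) : E ⧸ ι.range)) w = 1 := by
    intro w hw
    rw [hlift_η, MonoidHom.comp_apply, QuotientGroup.mk'_apply, QuotientGroup.eq_one_iff]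
    rcases hw with ⟨i, rfl⟩ | rfl
    · simp [hs]
    · exact ⟨_, hrel.symm⟩
  have hcent' : (QuotientGroup.mk' ι.range).ker ≤ center E := by rwa [hker]
  obtain ⟨σ, hσ⟩ := hlift (QuotientGroup.mk' ι.range) (QuotientGroup.mk'_surjective _) hcent'
    (by rwa [hker]) (PresentedGroup.toGroup hrels)
  obtain ⟨δ, hδK, hδ⟩ := (QuotientGroup.mk' ι.range).exists_eq_mul_of_comp_eq hcent'
    (α := σ.comp (PresentedGroup.mk _)) (β := η) (by
      rw [← MonoidHom.comp_assoc, hσ, ← hlift_η]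
      refine FreeGroup.ext_hom _ _ fun x => ?_
      rw [MonoidHom.comp_apply, FreeGroup.lift_apply_of]
      exact PresentedGroup.toGroup.of hrels)
  rw [hker] at hδK
  have hδrel : ∀ w ∈ closedOrbRels g r p, δ w = η w := fun w hw => by
    rw [hδ w, MonoidHom.comp_apply, PresentedGroup.one_of_mem hw, map_one, one_mul]
  have hδs : ∀ i, δ (.of (.inr i)) = 1 := fun i => by
    obtain ⟨q, hq⟩ := hδK (.of (.inr i))
    have : ι (q ^ p i) = ι 1 := by
      rw [map_pow, hq, ← map_pow, hδrel _ (Or.inl ⟨i, rfl⟩), map_pow, hs, map_one]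
    rw [← hq, (pow_eq_one_iff_left (hp i)).mp (hι this), map_one]
  have hcomm : ∀ x y, Commute (δ x) (δ y) := fun x y => mem_center_iff.mp (hcent (hδK y)) (δ x)
  have hδrelator : δ (closedOrbRelator g r) = 1 := by
    rw [map_closedOrbRelator, List.prod_eq_one fun x hx => ?_, List.prod_eq_one fun x hx => ?_,
      one_mul] <;> obtain ⟨j, rfl⟩ := List.mem_ofFn.mp hx
    · exact hδs j
    · exact commutatorElement_eq_one_iff_commute.mpr (hcomm _ _)
  rw [hδrel _ (Or.inr rfl), hrel, ← map_one ι] at hδrelator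
  simpa using hι hδrelator

theorem not_liftsThroughDivisibleCentralExtensions_closedOrb_of_one_le_genus
    (hp : ∀ i, p i ≠ 0) (hg : 1 ≤ g) :
    ¬ LiftsThroughDivisibleCentralExtensions (PresentedGroup (closedOrbRels g r p)) := by
  obtain ⟨g, rfl⟩ : ∃ g', g = g' + 1 := ⟨g - 1, by omega⟩
  let gen : Fin (2 * (g + 1)) ⊕ Fin r → Heisenberg ℚ := Sum.elim
    (fun a => if (a : ℕ) = 0 then ⟨1, 0, 0⟩ else if (a : ℕ) = 1 then ⟨0, 1, 0⟩ else 1) 1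
  refine not_liftsThroughDivisibleCentralExtensions_closedOrb hp Heisenberg.central
    Heisenberg.central_injective Heisenberg.range_central_le_center (FreeGroup.lift gen)
    (fun i => by simp [gen]) ?_
  rw [map_closedOrbRelator, List.ofFn_succ, List.prod_cons, List.prod_eq_one fun x hx => ?_,
    List.prod_eq_one fun x hx => ?_]
  · have h1 : 1 % (2 * (g + 1)) = 1 := Nat.mod_eq_of_lt (by omega)
    simpa [gen, h1] using Heisenberg.commutatorElement_eq_central
  all_goals
    obtain ⟨j, rfl⟩ := List.mem_ofFn.mp hx
    simp [gen]

theorem not_liftsThroughDivisibleCentralExtensions_closedOrb_of_four_le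
    (hp : ∀ i, 2 ≤ p i) (hr : 4 ≤ r) :
    ¬ LiftsThroughDivisibleCentralExtensions (PresentedGroup (closedOrbRels g r p)) := by
  obtain ⟨k, rfl⟩ : ∃ k, r = 4 + k := ⟨r - 4, by omega⟩
  let s (i : Fin (4 + k)) : Monoid.CoprodI fun i => Multiplicative (ZMod (p i)) :=
    Monoid.CoprodI.of (i := i) (Multiplicative.ofAdd 1)
  have hs_ne (i) : Multiplicative.ofAdd (1 : ZMod (p i)) ≠ 1 := by
    have : Fact (1 < p i) := ⟨hp i⟩
    simp
  have hs_pow (i) : s i ^ p i = 1 := by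
    rw [← map_pow, ← ofAdd_nsmul, nsmul_one, ZMod.natCast_self, ofAdd_zero, map_one]
  let c (j : Fin 4) := s (Fin.castAdd k j)
  let a := c 0 * c 1
  let b := c 2 * c 3
  have ha : orderOf a = 0 :=
    Monoid.CoprodI.orderOf_of_mul_of (by simp [Fin.ext_iff]) (hs_ne _) (hs_ne _)
  have hb : orderOf b = 0 :=
    Monoid.CoprodI.orderOf_of_mul_of (by simp [Fin.ext_iff]) (hs_ne _) (hs_ne _)
  let gen : Fin (2 * g) ⊕ Fin (4 + k) → ShearAmalgam a b := Sum.elim 1 <| Fin.addCases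
    ![shearLeft a b (c 0), shearLeft a b (c 1), shearRight a b (c 2), shearRight a b (c 3)] 1
  refine not_liftsThroughDivisibleCentralExtensions_closedOrb
    (fun i => (zero_lt_two.trans_le (hp i)).ne')
    (shearCentral a b) (shearCentral_injective ha hb) (range_shearCentral_le_center a b)
    (FreeGroup.lift gen) (fun i => ?_) ?_
  · induction i using Fin.addCases with
    | left j => fin_cases j <;> simp [gen, c, ← map_pow, hs_pow]
    | right j => simp [gen]
  · have htail : (List.ofFn fun j : Fin k =>
        FreeGroup.lift gen (.of (.inr (Fin.natAdd 4 j)))).prod = 1 :=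
      List.prod_eq_one (by simp [gen])
    rw [map_closedOrbRelator, List.prod_eq_one fun x hx => ?_, one_mul, List.ofFn_add,
      List.prod_append, htail, mul_one]
    · show shearLeft a b (c 0) * (shearLeft a b (c 1) *
        (shearRight a b (c 2) * (shearRight a b (c 3) * 1))) = _
      rw [mul_one, ← mul_assoc, ← map_mul, ← map_mul, shearLeft_mul_shearRight]
    · obtain ⟨j, rfl⟩ := List.mem_ofFn.mp hx
      simp [gen]

end ClosedOrbifold

/-- The fundamental group
`⟨a₁,…,a_{2g}, s₁,…,s_r ∣ s₁^{p₁},…,s_r^{p_r}, [a₁,a₂]⋯[a_{2g−1},a_{2g}]·s₁⋯s_r⟩` of a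
sufficiently large closed orientable 2-orbifold (`g ≥ 1` or `r ≥ 4`, cone orders
`p_i ≥ 2`) is not isomorphic to any free product of a family of cyclic groups. -/
theorem closed_orbifold_group_not_free_product_of_cyclics
    (g r : ℕ) (p : Fin r → ℕ) (hp : ∀ i, 2 ≤ p i) (hlarge : 1 ≤ g ∨ 4 ≤ r)
    (κ : Type u) (D : κ → Type v) [∀ k, Group (D k)]
    (hcyc : ∀ k, ∃ d : D k, Subgroup.zpowers d = ⊤) :
    IsEmpty (PresentedGroup (closedOrbRels g r p) ≃* Monoid.CoprodI D) := by
  refine ⟨fun e => ?_⟩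
  have hlift : LiftsThroughDivisibleCentralExtensions (PresentedGroup (closedOrbRels g r p)) :=
    (Monoid.CoprodI.liftsThroughDivisibleCentralExtensions fun k =>
      liftsThroughDivisibleCentralExtensions_of_zpowers_eq_top (hcyc k).choose_spec).of_mulEquiv e
  rcases hlarge with hg | hr
  · exact not_liftsThroughDivisibleCentralExtensions_closedOrb_of_one_le_genus
      (fun i => (zero_lt_two.trans_le (hp i)).ne') hg hlift
  · exact not_liftsThroughDivisibleCentralExtensions_closedOrb_of_four_le hp hr hlift
end

section
/- Let g ≥ 0, r ≥ 0 and p₁,…,p_r ≥ 2 be integers with g ≥ 1 or r ≥ 4, and let G = ⟨a₁,…,a_{2g}, s₁,…,s_r | s₁^{p₁},…,s_r^{p_r}, [a₁,a₂]⋯[a_{2g−1},a_{2g}]·s₁⋯s_r⟩ be the fundamental group of a sufficiently large closed orientable 2-orbifold of genus g with cone points of orders p₁,…,p_r. Then for each 1 ≤ i ≤ r, the image of s_i in G has order exactly p_i. -/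
open scoped commutatorElement

/-!
The relation `s_iᵖⁱ = 1` bounds the order of `s_i` by `p_i`, so it suffices to send `G` to a
group in which `s_i` goes to an element of order exactly `p_i`, by assigning images to the
generators that satisfy the relations.

If `g ≥ 1`, use the dihedral group of order `4 p_i`: the commutator of the reflection `sr 0` and
the rotation `r 1` is `r (-2)`, so `a₁ ↦ sr 0`, `a₂ ↦ r 1`, `s_i ↦ r 2`, all other generators `↦ 1`
works. If `r ≥ 4`, then `s_i` is one of three consecutive cone points `s_c, s_{c+1}, s_{c+2}`
(with `c = i` or `c = i - 2`), which we send to a solution of `x y z = 1` in `PGL₂(ℂ)` with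
prescribed orders and the remaining generators to `1`. Such a solution is built from 2 × 2
matrices with prescribed eigenvalues: by Cayley–Hamilton, if `M` has distinct eigenvalues `λ, μ`
with `λⁿ = μⁿ`, then `Mⁿ` is scalar.
-/

open Polynomial
open scoped MatrixGroups

theorem orderOf_eq_of_pow_eq_one_of_orderOf_map {G H F : Type*} [Monoid G] [Monoid H]
    [FunLike F G H] [MonoidHomClass F G H] (φ : F) {x : G} {n : ℕ} (hx : x ^ n = 1)
    (hφ : orderOf (φ x) = n) : orderOf x = n :=
  Nat.dvd_antisymm (orderOf_dvd_of_pow_eq_one hx) (hφ ▸ orderOf_map_dvd (φ : G →* H) x)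

theorem PresentedGroup.orderOf_of_eq_of_lift {α : Type*} {rels : Set (FreeGroup α)} {x : α}
    {n : ℕ} (hx : FreeGroup.of x ^ n ∈ rels) {H : Type*} [Group H] {f : α → H}
    (hf : ∀ w ∈ rels, FreeGroup.lift f w = 1) (hn : orderOf (f x) = n) :
    orderOf (PresentedGroup.of (rels := rels) x) = n :=
  orderOf_eq_of_pow_eq_one_of_orderOf_map (toGroup hf) (one_of_mem hx) (by rwa [toGroup.of])

namespace List

theorem ofFn_eq_map_range {α : Type*} (n : ℕ) (f : ℕ → α) :
    ofFn (fun j : Fin n => f j) = (range n).map f := by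
  rw [ofFn_eq_map, ← map_coe_finRange_eq_range, map_map]; rfl

theorem prod_map_range_eq_of_eq_one {M : Type*} [Monoid M] {f : ℕ → M} {c k n : ℕ}
    (hn : c + k ≤ n) (hf : ∀ j, j < c ∨ c + k ≤ j → f j = 1) :
    ((range n).map f).prod = ((range k).map fun j => f (c + j)).prod := by
  obtain ⟨e, rfl⟩ := Nat.exists_eq_add_of_le hn
  simp only [range_add, map_append, map_map, prod_append]
  rw [prod_eq_one (l := map f _) (by simp only [mem_map, mem_range]; grind),
    prod_eq_one (l := map (f ∘ _) (range e))
      (by simp only [mem_map, mem_range, Function.comp_apply]; grind)]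
  simp only [one_mul, mul_one]; rfl

end List

theorem Polynomial.X_sub_C_mul_X_sub_C_dvd {K : Type*} [Field K] {p : K[X]} {a b : K}
    (hab : a ≠ b) (ha : p.IsRoot a) (hb : p.IsRoot b) : (X - C a) * (X - C b) ∣ p :=
  (isCoprime_X_sub_C_of_isUnit_sub (sub_ne_zero_of_ne hab).isUnit).mul_dvd
    (dvd_iff_isRoot.mpr ha) (dvd_iff_isRoot.mpr hb)

namespace Matrix

theorem pow_eq_scalar_of_charpoly_dvd {ι R : Type*} [Fintype ι] [DecidableEq ι] [CommRing R]
    (M : Matrix ι ι R) {k : ℕ} {c : R} (h : M.charpoly ∣ X ^ k - C c) : M ^ k = scalar ι c := by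
  obtain ⟨q, hq⟩ := h
  have := congrArg (aeval M) hq
  rw [map_mul, aeval_self_charpoly, zero_mul, map_sub, map_pow, aeval_X, aeval_C,
    sub_eq_zero] at this
  rw [this, algebraMap_eq_diagonal]; rfl

section FinTwo

variable {K : Type*} [Field K]

theorem charpoly_fin_two_eq_mul (M : Matrix (Fin 2) (Fin 2) K) {a b : K}
    (htr : M.trace = a + b) (hdet : M.det = a * b) :
    M.charpoly = (X - C a) * (X - C b) := by
  rw [charpoly_fin_two, htr, hdet, C_add, C_mul]; ring

theorem pow_eq_scalar_of_trace_det (M : Matrix (Fin 2) (Fin 2) K) {a b : K}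
    (htr : M.trace = a + b) (hdet : M.det = a * b) (hab : a ≠ b) {k : ℕ} (hk : a ^ k = b ^ k) :
    M ^ k = scalar (Fin 2) (a ^ k) := by
  refine M.pow_eq_scalar_of_charpoly_dvd ?_
  rw [charpoly_fin_two_eq_mul M htr hdet]
  exact X_sub_C_mul_X_sub_C_dvd hab (by simp) (by simp [hk])

end FinTwo

namespace ProjGenLinGroup

theorem mk_pow_eq_one_of_pow_eq_scalar {ι R : Type*} [Fintype ι] [DecidableEq ι] [CommRing R]
    {g : GL ι R} {k : ℕ} {c : R} (h : (g : Matrix ι ι R) ^ k = scalar ι c) : mk g ^ k = 1 := by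
  rw [← map_pow, mk_eq_one, GeneralLinearGroup.mem_center_iff_val_mem_range_scalar,
    Units.val_pow_eq_pow_val, h]
  exact ⟨c, rfl⟩

section FinTwo

variable {K : Type*} [Field K]

theorem mk_pow_eq_one_of_trace_det (g : GL (Fin 2) K) {a b : K}
    (htr : (g : Matrix (Fin 2) (Fin 2) K).trace = a + b)
    (hdet : (g : Matrix (Fin 2) (Fin 2) K).det = a * b) (hab : a ≠ b) {k : ℕ}
    (hk : a ^ k = b ^ k) : mk g ^ k = 1 :=
  mk_pow_eq_one_of_pow_eq_scalar (pow_eq_scalar_of_trace_det _ htr hdet hab hk)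

theorem orderOf_mk_diagonal_one_fin_two {ω : K} (hω : ω ≠ 0) :
    orderOf (mk (GeneralLinearGroup.mkOfDetNeZero (diagonal ![1, ω]) (by simpa using hω))) =
      orderOf ω := by
  refine orderOf_eq_orderOf_iff.mpr fun k => ?_
  rw [← map_pow, mk_eq_one, GeneralLinearGroup.mem_center_iff_val_mem_range_scalar,
    Units.val_pow_eq_pow_val]
  change diagonal ![1, ω] ^ k ∈ _ ↔ _
  rw [diagonal_pow]
  constructor
  · rintro ⟨c, hc⟩
    have hc := diagonal_injective ((scalar_apply c).symm.trans hc)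
    have h₀ := congrFun hc 0
    have h₁ := congrFun hc 1
    simp only [Pi.pow_apply, Matrix.cons_val_zero, one_pow, Matrix.cons_val_one] at h₀ h₁
    rw [← h₁, h₀]
  · intro h
    refine ⟨1, (scalar_apply 1).trans (congrArg diagonal ?_)⟩
    ext i; fin_cases i <;> simp [h]

end FinTwo

theorem exists_mul_mul_eq_one_of_two_le {a b c : ℕ} (ha : 2 ≤ a) (hb : 2 ≤ b) (hc : 2 ≤ c) :
    ∃ x y z : PGL(2, ℂ), x * y * z = 1 ∧ orderOf x = a ∧ y ^ b = 1 ∧ z ^ c = 1 := by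
  obtain ⟨ω, hω⟩ : ∃ ω : ℂ, IsPrimitiveRoot ω a := ⟨_, Complex.isPrimitiveRoot_exp a (by omega)⟩
  obtain ⟨β, hβ⟩ : ∃ β : ℂ, IsPrimitiveRoot β b := ⟨_, Complex.isPrimitiveRoot_exp b (by omega)⟩
  obtain ⟨γ, hγ⟩ : ∃ γ : ℂ, IsPrimitiveRoot γ c := ⟨_, Complex.isPrimitiveRoot_exp c (by omega)⟩
  have hω0 : ω ≠ 0 := hω.ne_zero (by omega)
  have hβ0 : β ≠ 0 := hβ.ne_zero (by omega)
  have hγ0 : γ ≠ 0 := hγ.ne_zero (by omega)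
  obtain ⟨l, hl⟩ := IsAlgClosed.exists_pow_nat_eq (γ * ω / β) two_pos
  have hl0 : l ≠ 0 := ne_zero_pow two_ne_zero (hl ▸ div_ne_zero (mul_ne_zero hγ0 hω0) hβ0)
  -- `n` and `m` are chosen so that `Z` has eigenvalues `1, γ` and `Z * X` has eigenvalues
  -- `l, l * β`, where `X = diag(1, ω)`.
  set n := (l * (1 + β) - 1 - γ) / (ω - 1)
  set m := 1 + γ - n
  have hn : n * (ω - 1) = l * (1 + β) - 1 - γ :=
    div_mul_cancel₀ _ (sub_ne_zero.mpr (hω.ne_one (by omega)))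
  have hX : (diagonal ![1, ω]).det ≠ 0 := by simpa using hω0
  have hZ : (!![m, m * n - γ; 1, n]).det ≠ 0 := by simpa [det_fin_two_of] using hγ0
  set X := GeneralLinearGroup.mkOfDetNeZero _ hX
  set Z := GeneralLinearGroup.mkOfDetNeZero _ hZ
  refine ⟨mk X, (mk (Z * X))⁻¹, mk Z, by rw [map_mul]; group,
    orderOf_mk_diagonal_one_fin_two hω0 ▸ hω.eq_orderOf.symm, ?_, ?_⟩
  · have hZX : ((Z * X : GL (Fin 2) ℂ) : Matrix (Fin 2) (Fin 2) ℂ) =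
        !![m, (m * n - γ) * ω; 1, n * ω] := by
      change !![m, m * n - γ; 1, n] * diagonal ![1, ω] = _
      rw [diagonal_fin_two, mul_fin_two]; simp
    rw [inv_pow, inv_eq_one]
    refine mk_pow_eq_one_of_trace_det _ (a := l) (b := l * β) ?_ ?_ ?_ ?_
    · rw [hZX, trace_fin_two_of]; linear_combination hn
    · rw [hZX, det_fin_two_of, show l * (l * β) = l ^ 2 * β by ring, hl]; field_simp; ring
    · intro h; exact hβ.ne_one (by omega) (by simpa [hl0] using h.symm)
    · rw [mul_pow, hβ.pow_eq_one, mul_one]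
  · refine mk_pow_eq_one_of_trace_det _ (a := 1) (b := γ) ?_ ?_ ?_ ?_
    · change trace !![m, m * n - γ; 1, n] = _; rw [trace_fin_two_of]; ring
    · change det !![m, m * n - γ; 1, n] = _; rw [det_fin_two_of]; ring
    · exact (hγ.ne_one (by omega)).symm
    · rw [one_pow, hγ.pow_eq_one]

end ProjGenLinGroup

end Matrix

namespace DihedralGroup

theorem commutator_sr_zero_r_one_mul_r_two (n : ℕ) :
    ⁅(sr 0 : DihedralGroup n), (r 1 : DihedralGroup n)⁆ * r 2 = 1 := by
  rw [commutatorElement_def, inv_sr, inv_r, sr_mul_r, sr_mul_sr, r_mul_r, r_mul_r, one_def]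
  ring_nf

theorem orderOf_r_two {p : ℕ} (hp : 2 ≤ p) : orderOf (r 2 : DihedralGroup (2 * p)) = p := by
  have : NeZero (2 * p) := ⟨by omega⟩
  rw [orderOf_r, show (2 : ZMod (2 * p)) = ((2 : ℕ) : ZMod (2 * p)) by norm_cast, ZMod.val_natCast,
    Nat.mod_eq_of_lt (by omega), Nat.gcd_mul_right_left]
  omega

end DihedralGroup

theorem lift_closedOrbRelator {H : Type*} [Group H] (g r : ℕ) (a d : ℕ → H) :
    FreeGroup.lift (Sum.elim (fun k : Fin (2 * g) => a k) (fun j : Fin r => d j))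
        (closedOrbRelator g r) =
      ((List.range g).map fun j => ⁅a (2 * j), a (2 * j + 1)⁆).prod *
        ((List.range r).map d).prod := by
  simp only [closedOrbRelator, map_mul, map_list_prod, List.map_ofFn, Function.comp_def,
    map_commutatorElement, FreeGroup.lift_apply_of, Sum.elim_inl, Sum.elim_inr]
  rw [List.ofFn_eq_map_range g (fun j => ⁅a (2 * j), a (2 * j + 1)⁆), List.ofFn_eq_map_range r d]

section

variable {H : Type*} [Group H] {g r : ℕ} {p : Fin r → ℕ}

theorem exists_lift_eq_of_commutator_mul_eq_one (hg : 1 ≤ g) (i : Fin r) {A B S : H}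
    (hABS : ⁅A, B⁆ * S = 1) (hS : S ^ p i = 1) :
    ∃ f : Fin (2 * g) ⊕ Fin r → H, (∀ w ∈ closedOrbRels g r p, FreeGroup.lift f w = 1) ∧
      f (.inr i) = S := by
  set a : ℕ → H := fun k => if k = 0 then A else if k = 1 then B else 1
  set d : ℕ → H := fun j => if j = i then S else 1
  refine ⟨Sum.elim (fun k : Fin (2 * g) => a k) (fun j : Fin r => d j), ?_, by simp [d]⟩
  rintro w (⟨j, rfl⟩ | rfl)
  · rw [map_pow, FreeGroup.lift_apply_of]
    simp only [Sum.elim_inr, d, Fin.val_eq_val]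
    split_ifs with hj
    · exact hj ▸ hS
    · exact one_pow _
  · rw [lift_closedOrbRelator, List.prod_map_range_eq_of_eq_one (c := 0) (k := 1) hg,
      List.prod_map_range_eq_of_eq_one (c := i) (k := 1) (n := r) (by omega)]
    · simpa [a, d] using hABS
    · intro j hj; simp only [d]; rw [if_neg (by omega)]
    · intro j hj
      simp only [a]; rw [if_neg (by omega), if_neg (by omega), commutatorElement_one_left]

theorem exists_lift_eq_of_mul_mul_eq_one {c : ℕ} (hc : c + 2 < r) {x₀ x₁ x₂ : H}
    (hx : x₀ * x₁ * x₂ = 1) (h₀ : x₀ ^ p ⟨c, by omega⟩ = 1) (h₁ : x₁ ^ p ⟨c + 1, by omega⟩ = 1)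
    (h₂ : x₂ ^ p ⟨c + 2, hc⟩ = 1) :
    ∃ f : Fin (2 * g) ⊕ Fin r → H, (∀ w ∈ closedOrbRels g r p, FreeGroup.lift f w = 1) ∧
      f (.inr ⟨c, by omega⟩) = x₀ ∧ f (.inr ⟨c + 1, by omega⟩) = x₁ ∧
        f (.inr ⟨c + 2, hc⟩) = x₂ := by
  set d : ℕ → H := fun j =>
    if j = c then x₀ else if j = c + 1 then x₁ else if j = c + 2 then x₂ else 1
  refine ⟨Sum.elim (fun k : Fin (2 * g) => (1 : ℕ → H) k) (fun j : Fin r => d j), ?_,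
    by simp [d], by simp [d], by simp [d]⟩
  rintro w (⟨j, rfl⟩ | rfl)
  · rw [map_pow, FreeGroup.lift_apply_of]
    simp only [Sum.elim_inr, d]
    split_ifs with hj₀ hj₁ hj₂
    · rwa [show j = ⟨c, by omega⟩ from Fin.ext hj₀]
    · rwa [show j = ⟨c + 1, by omega⟩ from Fin.ext hj₁]
    · rwa [show j = ⟨c + 2, hc⟩ from Fin.ext hj₂]
    · exact one_pow _
  · rw [lift_closedOrbRelator,
      List.prod_map_range_eq_of_eq_one (c := c) (k := 3) (n := r) (by omega)]
    · simp [d, List.range_succ, hx, ← mul_assoc]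
    · intro j hj; simp only [d]; rw [if_neg (by omega), if_neg (by omega), if_neg (by omega)]

end

theorem orderOf_cone_generator_of_one_le_genus {g r : ℕ} {p : Fin r → ℕ} (hg : 1 ≤ g)
    (i : Fin r) (hpi : 2 ≤ p i) :
    orderOf (PresentedGroup.of (rels := closedOrbRels g r p) (Sum.inr i)) = p i := by
  obtain ⟨f, hf, hfi⟩ := exists_lift_eq_of_commutator_mul_eq_one hg i
    (DihedralGroup.commutator_sr_zero_r_one_mul_r_two (2 * p i))
    (DihedralGroup.orderOf_r_two hpi ▸ pow_orderOf_eq_one _)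
  exact PresentedGroup.orderOf_of_eq_of_lift (Or.inl ⟨i, rfl⟩) hf
    (hfi ▸ DihedralGroup.orderOf_r_two hpi)

theorem orderOf_cone_generator_of_four_le {g r : ℕ} {p : Fin r → ℕ} (hp : ∀ i, 2 ≤ p i)
    (hr : 4 ≤ r) (i : Fin r) :
    orderOf (PresentedGroup.of (rels := closedOrbRels g r p) (Sum.inr i)) = p i := by
  rcases (by omega : (i : ℕ) + 2 < r ∨ 2 ≤ (i : ℕ)) with hi | hi
  · obtain ⟨x, y, z, hxyz, hx, hy, hz⟩ := Matrix.ProjGenLinGroup.exists_mul_mul_eq_one_of_two_le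
      (hp i) (hp ⟨i + 1, by omega⟩) (hp ⟨i + 2, hi⟩)
    obtain ⟨f, hf, hfx, -⟩ :=
      exists_lift_eq_of_mul_mul_eq_one hi hxyz (hx ▸ pow_orderOf_eq_one x) hy hz
    exact PresentedGroup.orderOf_of_eq_of_lift (Or.inl ⟨i, rfl⟩) hf (hfx ▸ hx)
  · obtain ⟨v, hv⟩ := i
    obtain ⟨c, rfl⟩ : ∃ c, v = c + 2 := ⟨v - 2, by simp only at hi; omega⟩
    obtain ⟨x, y, z, hxyz, hx, hy, hz⟩ := Matrix.ProjGenLinGroup.exists_mul_mul_eq_one_of_two_le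
      (hp ⟨c + 2, hv⟩) (hp ⟨c, by omega⟩) (hp ⟨c + 1, by omega⟩)
    have hyzx : y * z * x = 1 := mul_eq_one_comm.mp (by rw [← mul_assoc]; exact hxyz)
    obtain ⟨f, hf, -, -, hfx⟩ :=
      exists_lift_eq_of_mul_mul_eq_one hv hyzx hy hz (hx ▸ pow_orderOf_eq_one x)
    exact PresentedGroup.orderOf_of_eq_of_lift (Or.inl ⟨_, rfl⟩) hf (hfx ▸ hx)

/-- In the fundamental group
`⟨a₁,…,a_{2g}, s₁,…,s_r ∣ s₁^{p₁},…,s_r^{p_r}, [a₁,a₂]⋯[a_{2g−1},a_{2g}]·s₁⋯s_r⟩` of a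
sufficiently large closed orientable 2-orbifold (`g ≥ 1` or `r ≥ 4`, cone orders
`p_i ≥ 2`), the image of each generator `s_i` has order exactly `p_i`. -/
theorem orderOf_cone_generator (g r : ℕ) (p : Fin r → ℕ) (hp : ∀ i, 2 ≤ p i)
    (hlarge : 1 ≤ g ∨ 4 ≤ r) (i : Fin r) :
    orderOf (PresentedGroup.of (rels := closedOrbRels g r p) (Sum.inr i)) = p i := by
  rcases hlarge with hg | hr
  · exact orderOf_cone_generator_of_one_le_genus hg i (hp i)
  · exact orderOf_cone_generator_of_four_le hp hr i
end
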